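/- arXiv:q-alg/9602018 — 4 statements merged into one kernel-verified Lean document; each statement's English description precedes it below -/
import Mathlib

section
/- For every integer M (positive or negative), the q-binomial theorem identity (z;q)_M = sum over integers i of (-z)^i q^{i(i-1)/2} [M choose i]_q holds, where the Gaussian polynomial is extended to all integer M as [M choose i]_q = (q^{M-i+1};q)_i/(q;q)_i for i >= 0 and 0 for i < 0, and (z;q)_M for M < 0 means 1/(q^M z;q)_{-M}. -/
/- STATEMENT 1: q-binomial theorem `(z;q)_M = ∑_i (-z)^i q^{i(i-1)/2} [M choose i]_q`
for every integer `M`, with the extended Gaussian polynomial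
`[M choose i]_q = (q^{M-i+1};q)_i/(q;q)_i` for `i ≥ 0` and `0` for `i < 0`, and
`(z;q)_M := (q^M z;q)_{-M}⁻¹` for `M < 0`.
We work with `q = RatFunc.X : RatFunc ℚ` and treat `z` as the formal power series
variable, i.e. in the ring `PowerSeries (RatFunc ℚ)` with `z = PowerSeries.X`.
The (possibly infinite) sum `∑_i (-z)^i q^{i(i-1)/2} [M choose i]_q` is the formal
power series whose coefficient of `z^i` is `(-1)^i q^{i(i-1)/2} [M choose i]_q`,
rendered via `PowerSeries.mk`; the inverse (for `M < 0`) exists in the power series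
ring and is rendered by `Ring.inverse`. -/

open Finset

noncomputable abbrev q : RatFunc ℚ := RatFunc.X

/-- `(z;q)_m` for the variable `z = PowerSeries.X`, `m ≥ 0`. -/
noncomputable def zPoch (a : ℤ) (m : ℕ) : PowerSeries (RatFunc ℚ) :=
  ∏ j ∈ range m, (1 - PowerSeries.C (q ^ (a + j)) * PowerSeries.X)

/-- `(z;q)_M` for all integers `M`: for `M < 0` it is `(q^M z;q)_{-M}⁻¹`. -/
noncomputable def zPochZ (M : ℤ) : PowerSeries (RatFunc ℚ) :=
  if 0 ≤ M then zPoch 0 M.toNat else Ring.inverse (zPoch M (-M).toNat)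

/-- Extended Gaussian polynomial `[M choose i]_q`. -/
noncomputable def gaussE (M i : ℤ) : RatFunc ℚ :=
  if 0 ≤ i then (∏ j ∈ range i.toNat, (1 - q ^ (M - i + 1) * q ^ j))
      / (∏ j ∈ range i.toNat, (1 - q * q ^ j)) else 0

lemma q_ne_zero : (q : RatFunc ℚ) ≠ 0 := RatFunc.X_ne_zero

lemma q_pow_ne_one {n : ℕ} (hn : n ≠ 0) : (q : RatFunc ℚ) ^ n ≠ 1 := by
  intro he
  have h1 : algebraMap (Polynomial ℚ) (RatFunc ℚ) (Polynomial.X ^ n) =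
      algebraMap (Polynomial ℚ) (RatFunc ℚ) 1 := by
    rw [map_pow, map_one, RatFunc.algebraMap_X]; exact he
  have h2 := RatFunc.algebraMap_injective ℚ h1
  have := congrArg Polynomial.natDegree h2
  simp [Polynomial.natDegree_X_pow] at this
  exact hn this

lemma q_zpow_ne_one {k : ℤ} (hk : k ≠ 0) : (q : RatFunc ℚ) ^ k ≠ 1 := by
  have hnat : ∀ n : ℕ, n ≠ 0 → (q : RatFunc ℚ) ^ (n : ℤ) ≠ 1 := by
    intro n hn
    rw [zpow_natCast]; exact q_pow_ne_one hn
  rcases lt_or_gt_of_ne hk with h | h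
  · intro he
    have h2 : (q : RatFunc ℚ) ^ (-k) = 1 := by
      rw [zpow_neg, he, inv_one]
    have h3 : ((-k).toNat : ℤ) = -k := Int.toNat_of_nonneg (by omega)
    exact hnat (-k).toNat (by omega) (by rw [h3]; exact h2) 
  · intro he
    have h3 : ((k).toNat : ℤ) = k := Int.toNat_of_nonneg (by omega)
    exact hnat k.toNat (by omega) (by rw [h3]; exact he)

lemma factor_eq (a : ℤ) (j : ℕ) :
    (1 : RatFunc ℚ) - q ^ a * q ^ j = 1 - q ^ (a + j) := by
  rw [zpow_add₀ q_ne_zero, zpow_natCast]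

lemma factor_ne_zero {a : ℤ} (j : ℕ) (h : a + j ≠ 0) :
    (1 : RatFunc ℚ) - q ^ a * q ^ j ≠ 0 := by
  rw [factor_eq]
  exact sub_ne_zero.2 fun he => q_zpow_ne_one h he.symm

noncomputable def Np (a : ℤ) (n : ℕ) : RatFunc ℚ := ∏ j ∈ range n, (1 - q ^ a * q ^ j)

lemma Np_ne_zero {a : ℤ} {n : ℕ} (h : ∀ j < n, a + (j : ℤ) ≠ 0) : Np a n ≠ 0 := by
  refine Finset.prod_ne_zero_iff.2 fun j hj => factor_ne_zero j (h j (mem_range.mp hj))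

lemma Np_succ_last (a : ℤ) (n : ℕ) : Np a (n + 1) = Np a n * (1 - q ^ a * q ^ n) :=
  prod_range_succ _ _

lemma Np_succ_first (a : ℤ) (n : ℕ) : Np a (n + 1) = (1 - q ^ a) * Np (a + 1) n := by
  rw [Np, prod_range_succ']
  simp only [pow_zero, mul_one]
  rw [mul_comm, Np]
  congr 1
  refine Finset.prod_congr rfl fun j _ => ?_
  rw [zpow_add₀ q_ne_zero, zpow_one, pow_succ]
  ring

lemma gaussE_natCast (M : ℤ) (n : ℕ) :
    gaussE M n = Np (M - n + 1) n / Np 1 n := by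
  simp [gaussE, Np, zpow_one]

lemma pascal (M : ℤ) (n : ℕ) :
    gaussE (M + 1) ((n : ℤ) + 1) = gaussE M ((n : ℤ) + 1) + q ^ (M - n) * gaussE M n := by
  have hcast : ((n : ℤ) + 1) = ((n + 1 : ℕ) : ℤ) := by push_cast; ring
  rw [hcast, gaussE_natCast, gaussE_natCast, gaussE_natCast]
  have e1 : M + 1 - (n + 1 : ℕ) + 1 = M - n + 1 := by push_cast; ring
  have e2 : M - (n + 1 : ℕ) + 1 = M - n := by push_cast; ring
  rw [e1, e2]
  have hD : Np 1 n ≠ 0 := Np_ne_zero fun j _ => by omega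
  have hE : (1 : RatFunc ℚ) - q ^ (1 : ℤ) * q ^ n ≠ 0 := factor_ne_zero n (by omega)
  have hD1 : Np 1 (n + 1) ≠ 0 := Np_ne_zero fun j _ => by omega
  rw [Np_succ_last 1 n]
  -- LHS numerator
  rw [show Np (M - n + 1) (n + 1) = Np (M - n + 1) n * (1 - q ^ (M - n + 1) * q ^ n) from
    Np_succ_last _ n]
  rw [show Np (M - n) (n + 1) = (1 - q ^ (M - n)) * Np (M - n + 1) n from Np_succ_first _ n]
  have key : (1 : RatFunc ℚ) - q ^ (M - n + 1) * q ^ n = 1 - q ^ (M + 1) := by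
    rw [factor_eq]; congr 1; ring
  rw [key]
  have hq1 : (q : RatFunc ℚ) ^ (M + 1) = q ^ (M - n) * (q * q ^ n) := by
    have h1 : (M + 1) = (M - n) + ((n : ℤ) + 1) := by ring
    rw [h1, zpow_add₀ q_ne_zero, show ((n:ℤ)+1) = ((n+1 : ℕ) : ℤ) by push_cast; ring,
      zpow_natCast, pow_succ]
    ring
  have hE' : (1 : RatFunc ℚ) - q * q ^ n ≠ 0 := by
    have := factor_ne_zero (a := 1) n (by omega); rwa [zpow_one] at this
  simp only [zpow_one]
  field_simp
  rw [hq1]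
  ring

noncomputable def G (M : ℤ) : PowerSeries (RatFunc ℚ) :=
  PowerSeries.mk (fun i : ℕ => (-1) ^ i * q ^ (i * (i - 1) / 2) * gaussE M i)

lemma tri (n : ℕ) : (n + 1) * ((n + 1) - 1) / 2 = n * (n - 1) / 2 + n := by
  cases n with
  | zero => rfl
  | succ m =>
    have h : (m + 1 + 1) * (m + 1) = (m + 1) * m + (m + 1) * 2 := by ring
    simp only [Nat.add_sub_cancel, h]
    rw [Nat.add_mul_div_right _ _ (by norm_num : 0 < 2)]

lemma gaussE_zero (M : ℤ) : gaussE M 0 = 1 := by simp [gaussE]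

lemma step_G (M : ℤ) :
    G (M + 1) = G M * (1 - PowerSeries.C (q ^ M) * PowerSeries.X) := by
  have hexp : G M * (1 - PowerSeries.C (q ^ M) * PowerSeries.X)
      = G M - PowerSeries.C (q ^ M) * (G M * PowerSeries.X) := by ring
  rw [hexp]
  ext i
  rw [map_sub, PowerSeries.coeff_C_mul]
  cases i with
  | zero =>
    simp [G, PowerSeries.coeff_zero_mul_X, gaussE_zero]
  | succ n =>
    rw [PowerSeries.coeff_succ_mul_X]
    simp only [G, PowerSeries.coeff_mk]
    have hc : ((n + 1 : ℕ) : ℤ) = (n : ℤ) + 1 := by push_cast; ring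
    rw [hc, pascal M n, tri, pow_add]
    have hq : (q : RatFunc ℚ) ^ (n : ℕ) * q ^ (M - n) = q ^ M := by
      rw [← zpow_natCast q n, ← zpow_add₀ q_ne_zero]; congr 1; ring
    linear_combination ((-1 : RatFunc ℚ) ^ (n + 1) * q ^ (n * (n - 1) / 2) * gaussE M n) * hq

lemma constCoeff_zPoch (a : ℤ) (m : ℕ) :
    PowerSeries.constantCoeff (zPoch a m) = 1 := by
  rw [zPoch, map_prod]
  refine Finset.prod_eq_one fun j _ => ?_
  simp

lemma zPoch_isUnit (a : ℤ) (m : ℕ) : IsUnit (zPoch a m) := by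
  rw [PowerSeries.isUnit_iff_constantCoeff, constCoeff_zPoch]
  exact isUnit_one

lemma lin_isUnit (c : RatFunc ℚ) :
    IsUnit (1 - PowerSeries.C c * PowerSeries.X) := by
  rw [PowerSeries.isUnit_iff_constantCoeff]
  simp

lemma zPoch_peel_first (a : ℤ) (m : ℕ) :
    zPoch a (m + 1)
      = (1 - PowerSeries.C (q ^ a) * PowerSeries.X) * zPoch (a + 1) m := by
  rw [zPoch, prod_range_succ', mul_comm]
  refine congrArg₂ (· * ·) (by norm_num) ?_
  rw [zPoch]
  refine Finset.prod_congr rfl fun j _ => ?_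
  congr 2
  push_cast; ring

lemma zPoch_peel_last (a : ℤ) (m : ℕ) :
    zPoch a (m + 1) = zPoch a m * (1 - PowerSeries.C (q ^ (a + m)) * PowerSeries.X) :=
  prod_range_succ _ _

lemma zPochZ_of_nonpos {M : ℤ} (h : M ≤ 0) :
    zPochZ M = Ring.inverse (zPoch M (-M).toNat) := by
  rcases eq_or_lt_of_le h with rfl | h'
  · simp [zPochZ, zPoch, Ring.inverse_one]
  · rw [zPochZ, if_neg (by omega)]

lemma step_zPochZ (M : ℤ) :
    zPochZ (M + 1) = zPochZ M * (1 - PowerSeries.C (q ^ M) * PowerSeries.X) := by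
  rcases le_or_gt 0 M with h | h
  · rw [zPochZ, if_pos (by omega), zPochZ, if_pos h]
    have ht : (M + 1).toNat = M.toNat + 1 := by omega
    rw [ht, zPoch_peel_last]
    congr 2
    rw [zero_add, Int.toNat_of_nonneg h]
  · rw [zPochZ_of_nonpos (by omega), zPochZ_of_nonpos (le_of_lt h)]
    have ht : (-M).toNat = (-(M + 1)).toNat + 1 := by omega
    rw [ht, zPoch_peel_first]
    rw [Ring.mul_inverse_rev, mul_assoc, Ring.inverse_mul_cancel _ (lin_isUnit _), mul_one]

lemma gaussE_zero_succ (n : ℕ) : gaussE 0 ((n + 1 : ℕ) : ℤ) = 0 := by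
  rw [gaussE_natCast]
  have hz : Np (0 - (n + 1 : ℕ) + 1) (n + 1) = 0 := by
    refine Finset.prod_eq_zero (Finset.self_mem_range_succ n) ?_
    rw [factor_eq]
    rw [show (0 - ((n + 1 : ℕ) : ℤ) + 1 + (n : ℤ)) = 0 by push_cast; ring, zpow_zero, sub_self]
  rw [hz, zero_div]

lemma G_zero : G 0 = 1 := by
  ext i
  rw [G, PowerSeries.coeff_mk, PowerSeries.coeff_one]
  cases i with
  | zero => simp [gaussE_zero]
  | succ n =>
    have h := gaussE_zero_succ n
    rw [show (((n + 1 : ℕ) : ℤ)) = (n : ℤ) + 1 by push_cast; ring] at h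
    simp [h]

lemma zPochZ_zero : zPochZ 0 = 1 := by
  rw [zPochZ, if_pos le_rfl]
  simp [zPoch]

theorem q_binomial_theorem (M : ℤ) :
    zPochZ M =
      PowerSeries.mk (fun i : ℕ => (-1) ^ i * q ^ (i * (i - 1) / 2) * gaussE M i) := by
  show zPochZ M = G M
  induction M using Int.induction_on with
  | zero => rw [zPochZ_zero, G_zero]
  | succ i ih => rw [step_zPochZ (i : ℤ), step_G (i : ℤ), ih]
  | pred i ih =>
    have h1 := step_zPochZ (-(i : ℤ) - 1)
    have h2 := step_G (-(i : ℤ) - 1)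
    rw [show (-(i : ℤ) - 1 + 1) = -(i : ℤ) by ring] at h1 h2
    have h3 : zPochZ (-(i : ℤ) - 1) * (1 - PowerSeries.C (q ^ (-(i : ℤ) - 1)) * PowerSeries.X)
        = G (-(i : ℤ) - 1) * (1 - PowerSeries.C (q ^ (-(i : ℤ) - 1)) * PowerSeries.X) := by
      rw [← h1, ← h2, ih]
    exact (lin_isUnit _).mul_right_cancel h3
end

section
/- The unique solution of the recursion f^{(1)}_L(b,c) = sum over d with |d-b| <= 1 and d ≡ b+1 (mod 2) of f^{(1)}_{L-1}(d,b) q^{L|d-c|/4}, with initial condition f^{(1)}_0(b,c) = δ_{b,0}, and f^{(1)}_L(b,c) = 0 unless |b-c| = 1, is given by f^{(1)}_L(b,c) = q^{bc/4} [L choose (L+b)/2]_q, where the Gaussian polynomial is interpreted as 0 when (L+b)/2 is not an integer in [0,L]. -/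
/- The 1-dimensional configuration sum `f^{(k)}_L(b,c)` of the SOS model.
We work in `RatFunc ℚ` where the variable `x = RatFunc.X` stands for `q^{1/4}`,
so that `q^{L|d-c|/4} = x^{L|d-c|}`. -/

open Finset

/-- `(b,c)` is weakly admissible: `b - c ∈ {-k, -k+2, …, k}`. -/
def WAdm (k : ℕ) (b c : ℤ) : Prop := (b - c).natAbs ≤ k ∧ (b - c + k) % 2 = 0

instance (k : ℕ) (b c : ℤ) : Decidable (WAdm k b c) := by
  unfold WAdm; infer_instance

/-- The unique solution `f^{(k)}_L(b,c)` of the difference equation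
`f^{(k)}_L(b,c) = Σ'_d f^{(k)}_{L-1}(d,b) q^{L|d-c|/4}` (sum over `d` with `(d,b)`
weakly admissible), with `f^{(k)}_0(b,c) = δ_{b,0}`, and `f^{(k)}_L(b,c) = 0` when
`(b,c)` is not weakly admissible. -/
noncomputable def fSOS (k : ℕ) : ℕ → ℤ → ℤ → RatFunc ℚ
  | 0, b, c => if b = 0 ∧ WAdm k b c then 1 else 0
  | (L + 1), b, c =>
      if WAdm k b c then
        ∑ m ∈ range (k + 1),
          fSOS k L (b - k + 2 * m) b *
            RatFunc.X ^ ((L + 1) * (b - (k : ℤ) + 2 * m - c).natAbs)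
      else 0

/-- `(q;q)_m` with `q = x^4`. -/
noncomputable def qFac4 (m : ℕ) : RatFunc ℚ :=
  ∏ j ∈ range m, (1 - RatFunc.X ^ (4 * (j + 1)))

/-- Gaussian polynomial `[M choose i]_q` with `q = x^4`, zero outside `0 ≤ i ≤ M`. -/
noncomputable def gauss4 (M i : ℤ) : RatFunc ℚ :=
  if 0 ≤ i ∧ i ≤ M then qFac4 M.toNat / (qFac4 i.toNat * qFac4 (M - i).toNat) else 0


lemma one_sub_X_pow_ne_zero (n : ℕ) (hn : 0 < n) : (1 : RatFunc ℚ) - RatFunc.X ^ n ≠ 0 := by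
  have h : (1 : RatFunc ℚ) - RatFunc.X ^ n =
      algebraMap (Polynomial ℚ) (RatFunc ℚ) (1 - Polynomial.X ^ n) := by
    simp [RatFunc.algebraMap_X]
  rw [h]
  apply RatFunc.algebraMap_ne_zero
  intro hc
  have := congrArg (Polynomial.eval 0) hc
  simp [Polynomial.eval_pow, hn.ne'] at this

lemma qFac4_ne_zero (m : ℕ) : qFac4 m ≠ 0 := by
  unfold qFac4
  exact Finset.prod_ne_zero_iff.mpr fun j _ => one_sub_X_pow_ne_zero _ (by positivity)

lemma qFac4_succ (m : ℕ) : qFac4 (m+1) = qFac4 m * (1 - RatFunc.X ^ (4 * (m + 1))) :=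
  Finset.prod_range_succ _ _

lemma qFac4_zero : qFac4 0 = 1 := Finset.prod_range_zero _

lemma gauss4_zero_right (M : ℤ) (hM : 0 ≤ M) : gauss4 M 0 = 1 := by
  rw [gauss4, if_pos ⟨le_refl _, hM⟩]
  simp [qFac4_zero, div_self (qFac4_ne_zero _)]

lemma gauss4_self (M : ℤ) (hM : 0 ≤ M) : gauss4 M M = 1 := by
  rw [gauss4, if_pos ⟨hM, le_refl _⟩]
  simp [qFac4_zero, div_self (qFac4_ne_zero _)]

lemma gauss4_symm (M i : ℤ) : gauss4 M i = gauss4 M (M - i) := by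
  unfold gauss4
  by_cases h : 0 ≤ i ∧ i ≤ M
  · rw [if_pos h, if_pos ⟨by omega, by omega⟩, show M - (M - i) = i by ring, mul_comm]
  · rw [if_neg h, if_neg (by omega)]

lemma pascalA (L : ℕ) (n : ℤ) :
    gauss4 ((L : ℤ) + 1) n
      = gauss4 L n + RatFunc.X ^ (4 * ((L : ℤ) + 1 - n)) * gauss4 L (n - 1) := by
  by_cases hn0 : n < 0
  · rw [gauss4, if_neg (by omega), gauss4, if_neg (by omega), gauss4, if_neg (by omega)]
    ring
  by_cases hn1 : (L : ℤ) + 1 < n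
  · rw [gauss4, if_neg (by omega), gauss4, if_neg (by omega), gauss4, if_neg (by omega)]
    ring
  by_cases hz : n = 0
  · subst hz
    rw [gauss4_zero_right _ (by omega), gauss4_zero_right _ (by omega),
      gauss4, if_neg (by omega)]
    ring
  by_cases ht : n = (L : ℤ) + 1
  · subst ht
    rw [gauss4_self _ (by omega), gauss4, if_neg (by omega),
      show (L : ℤ) + 1 - 1 = (L : ℤ) by ring, gauss4_self _ (by omega)]
    simp
  obtain ⟨a, ha⟩ : ∃ a : ℕ, n = (a : ℤ) + 1 := ⟨(n-1).toNat, by omega⟩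
  obtain ⟨j, hj⟩ : ∃ j : ℕ, (L : ℤ) = (a : ℤ) + 1 + j := ⟨(L - n).toNat, by omega⟩
  have hL : L = a + 1 + j := by omega
  subst ha hL
  rw [show (4 * ((((a:ℕ)+1+(j:ℕ) : ℕ) : ℤ) + 1 - ((a:ℤ)+1))) = ((4 * (j+1) : ℕ) : ℤ) by push_cast; ring,
    zpow_natCast]
  rw [gauss4, if_pos ⟨by omega, by omega⟩, gauss4, if_pos ⟨by omega, by omega⟩,
    gauss4, if_pos ⟨by omega, by omega⟩]
  rw [show ((((a:ℕ)+1+(j:ℕ):ℕ):ℤ) + 1).toNat = a + 1 + j + 1 by omega,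
    show (((a:ℤ))+1).toNat = a + 1 by omega,
    show ((((a:ℕ)+1+(j:ℕ):ℕ):ℤ) + 1 - ((a:ℤ)+1)).toNat = j + 1 by omega,
    show ((((a:ℕ)+1+(j:ℕ):ℕ):ℤ)).toNat = a + 1 + j by omega,
    show (((a:ℤ))+1-1).toNat = a by omega,
    show ((((a:ℕ)+1+(j:ℕ):ℕ):ℤ) - ((a:ℤ)+1)).toNat = j by omega,
    show ((((a:ℕ)+1+(j:ℕ):ℕ):ℤ) - ((a:ℤ)+1-1)).toNat = j + 1 by omega]
  rw [show a + 1 + j + 1 = (a + 1 + j) + 1 by ring, qFac4_succ (a + 1 + j),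
    qFac4_succ a, qFac4_succ j]
  have h1 := qFac4_ne_zero a
  have h2 := qFac4_ne_zero j
  have h3 := one_sub_X_pow_ne_zero (4*(a+1)) (by positivity)
  have h4 := one_sub_X_pow_ne_zero (4*(j+1)) (by positivity)
  field_simp
  ring

lemma pascalB (L : ℕ) (n : ℤ) :
    gauss4 ((L : ℤ) + 1) n = gauss4 L (n-1) + RatFunc.X ^ (4 * n) * gauss4 L n := by
  rw [gauss4_symm ((L:ℤ)+1) n, pascalA L ((L:ℤ)+1-n),
    gauss4_symm (L:ℤ) (n-1), gauss4_symm (L:ℤ) n,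
    show (L:ℤ) - (n-1) = (L:ℤ)+1-n by ring, show (L:ℤ)+1-n-1 = (L:ℤ)-n by ring,
    show 4*((L:ℤ)+1-((L:ℤ)+1-n)) = 4*n by ring]

/- STATEMENT 4: for `k = 1`, `f^{(1)}_L(b,c) = q^{bc/4} [L choose (L+b)/2]_q`, the
Gaussian polynomial being interpreted as `0` when `(L+b)/2` is not an integer in `[0,L]`. -/
theorem fSOS_one_closed_form (L : ℕ) (b c : ℤ) (h : WAdm 1 b c) :
    fSOS 1 L b c =
      if ((L : ℤ) + b) % 2 = 0 then
        RatFunc.X ^ (b * c) * gauss4 L (((L : ℤ) + b) / 2)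
      else 0 := by
  induction L generalizing b c with
  | zero =>
    simp only [fSOS, Nat.cast_zero, zero_add]
    by_cases hb : b = 0
    · subst hb
      rw [if_pos ⟨rfl, h⟩, if_pos (by omega : (0:ℤ) % 2 = 0),
        show (0:ℤ) * c = 0 by ring, zpow_zero, show (0:ℤ)/2 = 0 by norm_num,
        gauss4_zero_right 0 le_rfl]
      norm_num
    · rw [if_neg (by tauto)]
      by_cases hp : b % 2 = 0
      · rw [if_pos hp, gauss4, if_neg (by omega)]
        ring
      · rw [if_neg hp]
  | succ L IH =>
    have hx : (RatFunc.X : RatFunc ℚ) ≠ 0 := RatFunc.X_ne_zero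
    have hw1 : WAdm 1 (b-1) b := by unfold WAdm; omega
    have hw2 : WAdm 1 (b+1) b := by unfold WAdm; omega
    have hcc : c = b + 1 ∨ c = b - 1 := by
      obtain ⟨h1, h2⟩ := h; omega
    simp only [fSOS, if_pos h]
    rw [Finset.sum_range_succ, Finset.sum_range_succ, Finset.sum_range_zero, zero_add]
    push_cast
    rw [show b - 1 + 0 = b - 1 by ring, show b - 1 + 2 = b + 1 by ring]
    rw [IH (b-1) b hw1, IH (b+1) b hw2]
    by_cases hp : ((L:ℤ) + 1 + b) % 2 = 0
    · rw [if_pos (by omega : ((L:ℤ) + (b-1)) % 2 = 0),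
        if_pos (by omega : ((L:ℤ) + (b+1)) % 2 = 0), if_pos hp]
      set n := ((L:ℤ) + 1 + b) / 2 with hn_def
      have hn : 2 * n = (L:ℤ) + 1 + b := by omega
      rw [show ((L:ℤ) + (b-1)) / 2 = n - 1 by omega,
        show ((L:ℤ) + (b+1)) / 2 = n by omega]
      rcases hcc with hc | hc
      · subst hc
        rw [show (b - 1 - (b+1)).natAbs = 2 by omega,
          show (b + 1 - (b+1)).natAbs = 0 by omega,
          pascalA L n, show (b+1) * b = b * (b+1) by ring,
          show (RatFunc.X : RatFunc ℚ) ^ ((L+1) * 2)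
            = RatFunc.X ^ ((((L+1) * 2 : ℕ)) : ℤ) from (zpow_natCast _ _).symm]
        have key : (RatFunc.X : RatFunc ℚ) ^ ((b-1)*b) * RatFunc.X ^ ((((L+1) * 2 : ℕ)) : ℤ)
            = RatFunc.X ^ (b*(b+1)) * RatFunc.X ^ (4 * ((L:ℤ) + 1 - n)) := by
          rw [← zpow_add₀ hx, ← zpow_add₀ hx]
          congr 1
          push_cast
          linear_combination 2 * hn
        linear_combination (gauss4 (L:ℤ) (n-1)) * key
      · subst hc
        rw [show (b - 1 - (b-1)).natAbs = 0 by omega,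
          show (b + 1 - (b-1)).natAbs = 2 by omega,
          pascalB L n, show (b-1) * b = b * (b-1) by ring,
          show (RatFunc.X : RatFunc ℚ) ^ ((L+1) * 2)
            = RatFunc.X ^ ((((L+1) * 2 : ℕ)) : ℤ) from (zpow_natCast _ _).symm]
        have key : (RatFunc.X : RatFunc ℚ) ^ ((b+1)*b) * RatFunc.X ^ ((((L+1) * 2 : ℕ)) : ℤ)
            = RatFunc.X ^ (b*(b-1)) * RatFunc.X ^ (4 * n) := by
          rw [← zpow_add₀ hx, ← zpow_add₀ hx]
          congr 1
          push_cast
          linear_combination (-2) * hn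
        linear_combination (gauss4 (L:ℤ) n) * key
    · rw [if_neg (by omega : ¬ ((L:ℤ) + (b-1)) % 2 = 0),
        if_neg (by omega : ¬ ((L:ℤ) + (b+1)) % 2 = 0), if_neg hp]
      ring
end

section
/- With the crystal realization of B(Λ) by k-tuples of extended Young diagrams as above, if Y = (Y_1,...,Y_k) ∈ Y(Λ) and f̃_i^n Y = Y' = (Y'_1,...,Y'_k) ≠ 0 for some n > 0 and i ∈ {0,1}, then |Y'_j| ≤ |Y_j| + 1 for all 1 ≤ j ≤ k, i.e., each application sequence of a single Kashiwara lowering operator f̃_i increases each width by at most 1. -/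
/- The combinatorial crystal of `U_q(sl2-hat)` in terms of extended Young diagrams.

An extended Young diagram of charge `γ` is a weakly increasing integer sequence
`(y_j)_{j≥0}` eventually equal to `γ`; its width is the least `L` with `y_L = γ`.
A diagram has a concave corner at column `j` (site `(j, y_j)`, diagonal `d = j + y_j`)
if `j = 0` or `y_{j-1} < y_j`, and a convex corner at column `j` (site `(j+1, y_j)`,
diagonal `d = j + 1 + y_j`) if `y_j < y_{j+1}`. A corner has color `d mod 2`.
The `i`-signature of a `k`-tuple of diagrams is the list of all its `i`-colored corners
(`false` = concave = "0", `true` = convex = "1"), ordered by diagonal decreasing and,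
for equal diagonals, by diagram index increasing. The Kashiwara operator `f̃_i` cancels
adjacent `(0,1)` pairs (via a left-to-right stack scan) and turns the first remaining
`0` into a `1`, i.e. adds a node at the corresponding concave `i`-corner; if no
relevant `0` remains, `f̃_i` gives `0` (rendered by `Option`, `none` = `0`). -/

open Finset

/-- An extended Young diagram. -/
structure EYD where
  y : ℕ → ℤ
  charge : ℤ
  mono : ∀ j, y j ≤ y (j + 1)
  stab : ∃ N, ∀ j, N ≤ j → y j = charge

namespace EYD

theorem exists_eq (Y : EYD) : ∃ L, Y.y L = Y.charge :=
  ⟨Y.stab.choose, Y.stab.choose_spec _ le_rfl⟩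

/-- The width `|Y|`: the least `L` with `y_L` equal to the charge. -/
def width (Y : EYD) : ℕ := Nat.find Y.exists_eq

/-- Add one node at column `j` (only meaningful at a concave corner; otherwise the
diagram is returned unchanged). -/
def addBox (Y : EYD) (j : ℕ) : EYD :=
  if h : j = 0 ∨ Y.y (j - 1) < Y.y j then
    { y := Function.update Y.y j (Y.y j - 1)
      charge := Y.charge
      mono := by
        intro n
        rcases eq_or_ne n j with rfl | h1
        · rw [Function.update_self, Function.update_of_ne (by omega)]
          have := Y.mono n
          omega
        · rw [Function.update_of_ne h1]
          rcases eq_or_ne (n + 1) j with hj | h2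
          · rcases h with h0 | hlt
            · omega
            · have hn : j - 1 = n := by omega
              rw [hj, Function.update_self]
              rw [hn] at hlt
              omega
          · rw [Function.update_of_ne h2]
            exact Y.mono n
      stab := by
        obtain ⟨N, hN⟩ := Y.stab
        refine ⟨max N (j + 1), fun n hn => ?_⟩
        rw [Function.update_of_ne (by omega)]
        exact hN n (le_trans (le_max_left _ _) hn) }
  else Y

/-- The `i`-colored corners of `Y` on diagonal `d`, as pairs (column, `true` iff convex). -/
def cornersAt (Y : EYD) (i d : ℤ) : List (ℕ × Bool) :=
  (List.range (Y.width + 2)).filterMap (fun j =>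
    if (j = 0 ∨ Y.y (j - 1) < Y.y j) ∧ ((j : ℤ) + Y.y j = d) ∧ d % 2 = i then
      some (j, false)
    else if (Y.y j < Y.y (j + 1)) ∧ ((j : ℤ) + 1 + Y.y j = d) ∧ d % 2 = i then
      some (j, true)
    else none)


lemma y_mono (Y : EYD) : Monotone Y.y := monotone_nat_of_le_succ Y.mono

lemma y_le_charge (Y : EYD) (j : ℕ) : Y.y j ≤ Y.charge := by
  obtain ⟨N, hN⟩ := Y.stab
  calc Y.y j ≤ Y.y (j + N) := Y.y_mono (by omega)
    _ = Y.charge := hN _ (by omega)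

lemma y_width (Y : EYD) : Y.y Y.width = Y.charge := Nat.find_spec Y.exists_eq

lemma y_lt_charge (Y : EYD) {j : ℕ} (h : j < Y.width) : Y.y j < Y.charge :=
  lt_of_le_of_ne (Y.y_le_charge j) (Nat.find_min Y.exists_eq h)

lemma y_eq_charge (Y : EYD) {j : ℕ} (h : Y.width ≤ j) : Y.y j = Y.charge :=
  le_antisymm (Y.y_le_charge j) (Y.y_width ▸ Y.y_mono h)

lemma charge_addBox (Y : EYD) (j : ℕ) : (Y.addBox j).charge = Y.charge := by
  unfold addBox; split <;> rfl

lemma width_addBox_lt (Y : EYD) {j : ℕ} (h : j < Y.width) :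
    (Y.addBox j).width = Y.width := by
  unfold addBox
  split
  · show Nat.find _ = _
    rw [Nat.find_eq_iff]
    constructor
    · show Function.update Y.y j (Y.y j - 1) Y.width = Y.charge
      rw [Function.update_of_ne (by omega), Y.y_width]
    · intro m hm
      show ¬ Function.update Y.y j (Y.y j - 1) m = Y.charge
      rcases eq_or_ne m j with rfl | hne
      · rw [Function.update_self]; have := Y.y_lt_charge h; omega
      · rw [Function.update_of_ne hne]; have := Y.y_lt_charge hm; omega
  · rfl

lemma width_addBox_eq (Y : EYD)
    (hc : Y.width = 0 ∨ Y.y (Y.width - 1) < Y.y Y.width) :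
    (Y.addBox Y.width).width = Y.width + 1 := by
  unfold addBox
  rw [dif_pos hc]
  show Nat.find _ = _
  rw [Nat.find_eq_iff]
  constructor
  · show Function.update Y.y Y.width (Y.y Y.width - 1) (Y.width + 1) = Y.charge
    rw [Function.update_of_ne (by omega)]
    exact Y.y_eq_charge (by omega)
  · intro m hm
    show ¬ Function.update Y.y Y.width (Y.y Y.width - 1) m = Y.charge
    rcases eq_or_ne m Y.width with rfl | hne
    · rw [Function.update_self, Y.y_width]; omega
    · rw [Function.update_of_ne hne]
      have := Y.y_lt_charge (show m < Y.width by omega)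
      omega

lemma addBox_gt (Y : EYD) {j : ℕ} (h : Y.width < j) : Y.addBox j = Y := by
  unfold addBox
  rw [dif_neg]
  push_neg
  refine ⟨by omega, ?_⟩
  rw [Y.y_eq_charge (show Y.width ≤ j - 1 by omega), Y.y_eq_charge h.le]

end EYD

/-- The `i`-signature of a `k`-tuple of extended Young diagrams: all `i`-colored
corners, ordered by diagonal decreasing, then diagram index increasing. Each entry is
(diagram index, column, `true` iff convex). -/
def signature (k : ℕ) (YY : Fin k → EYD) (i : ℤ) : List (Fin k × ℕ × Bool) :=
  let dmax : ℤ := ((Finset.univ.fold max 0 (fun r => (YY r).width) : ℕ) : ℤ) + 2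
  let dmin : ℤ := Finset.univ.fold min 0 (fun r => (YY r).y 0)
  ((List.range ((dmax - dmin).toNat + 1)).map (fun n => dmax - n)).flatMap (fun d =>
    (List.finRange k).flatMap (fun r =>
      ((YY r).cornersAt i d).map (fun c => (r, c.1, c.2))))

/-- Left-to-right scan cancelling `(0,1)` pairs: a convex corner (`1`) cancels the most
recent uncancelled concave corner (`0`). -/
def stackStep {k : ℕ} (st : List (Fin k × ℕ × Bool)) (e : Fin k × ℕ × Bool) :
    List (Fin k × ℕ × Bool) :=
  match e.2.2, st with
  | true, (_, _, false) :: rest => rest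
  | _, _ => e :: st

/-- The corner at which `f̃_i` acts: the first (earliest in the signature) uncancelled
concave `i`-corner. -/
def ftildePos (k : ℕ) (YY : Fin k → EYD) (i : ℤ) : Option (Fin k × ℕ × Bool) :=
  (((signature k YY i).foldl stackStep []).filter (fun e => !e.2.2)).getLast?

/-- The Kashiwara operator `f̃_i` on `k`-tuples of extended Young diagrams
(`none` plays the role of `0`). -/
def ftilde (k : ℕ) (YY : Fin k → EYD) (i : ℤ) : Option (Fin k → EYD) :=
  match ftildePos k YY i with
  | some (r, j, _) => some (Function.update YY r ((YY r).addBox j))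
  | none => none

/-- `n`-fold iteration of `f̃_i` (with `none` playing the role of `0`). -/
def ftildeIter (k : ℕ) (i : ℤ) : ℕ → (Fin k → EYD) → Option (Fin k → EYD)
  | 0, YY => some YY
  | n + 1, YY => (ftilde k YY i).bind (ftildeIter k i n)

/- STATEMENT 16: if `Y = (Y_1,…,Y_k) ∈ Y(Λ)` (a `k`-tuple of extended Young diagrams of
charge `0` for the first `s` entries and `1` for the last `t = k - s`, where
`Λ = sΛ_0 + tΛ_1`) and `f̃_i^n Y = Y' ≠ 0` for some `n > 0` and `i ∈ {0,1}`, then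
`|Y'_j| ≤ |Y_j| + 1` for all `1 ≤ j ≤ k`. -/

lemma mem_stackStep {k : ℕ} {st : List (Fin k × ℕ × Bool)} {a e : Fin k × ℕ × Bool}
    (h : e ∈ stackStep st a) : e = a ∨ e ∈ st := by
  obtain ⟨r, j, b⟩ := a
  cases b with
  | false => simp only [stackStep] at h; exact List.mem_cons.mp h
  | true =>
    rcases st with _ | ⟨⟨r', j', b'⟩, rest⟩
    · simp only [stackStep] at h; exact List.mem_cons.mp h
    · cases b' with
      | false =>
        simp only [stackStep] at h
        right; exact List.mem_cons_of_mem _ h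
      | true => simp only [stackStep] at h; exact List.mem_cons.mp h

lemma mem_foldl_stackStep {k : ℕ} :
    ∀ (l st : List (Fin k × ℕ × Bool)) (e : Fin k × ℕ × Bool),
      e ∈ List.foldl stackStep st l → e ∈ st ∨ e ∈ l := by
  intro l
  induction l with
  | nil => intro st e h; simp only [List.foldl_nil] at h; tauto
  | cons a l ih =>
    intro st e h
    rw [List.foldl_cons] at h
    rcases ih _ _ h with h' | h'
    · rcases mem_stackStep h' with h'' | h''
      · right; simp [h'']
      · tauto
    · right; exact List.mem_cons_of_mem _ h'

lemma mem_signature_prop {k : ℕ} {YY : Fin k → EYD} {i : ℤ} {r : Fin k} {j : ℕ}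
    (h : (r, j, false) ∈ signature k YY i) :
    (j = 0 ∨ (YY r).y (j - 1) < (YY r).y j) ∧ ((j : ℤ) + (YY r).y j) % 2 = i := by
  simp only [signature, List.mem_flatMap, List.mem_map, List.mem_finRange] at h
  obtain ⟨d, -, r', -, c, hc, hrc⟩ := h
  obtain ⟨cj, cb⟩ := c
  obtain ⟨hr, hj, hb⟩ : r' = r ∧ cj = j ∧ cb = false := by
    simpa using hrc
  subst hr; subst hb
  rw [hj] at hc
  simp only [EYD.cornersAt, List.mem_filterMap, List.mem_range] at hc
  obtain ⟨a, -, ha⟩ := hc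
  split_ifs at ha with h1 h2
  · obtain ⟨hcond, hd, hmod⟩ := h1
    have : a = j := by simpa using congrArg Prod.fst (Option.some_injective _ ha)
    subst this
    exact ⟨hcond, by rw [hd]; exact hmod⟩
  · exact absurd (congrArg (fun o => (o.map Prod.snd)) ha) (by simp)

lemma ftilde_eq_some {k : ℕ} {YY YY' : Fin k → EYD} {i : ℤ}
    (h : ftilde k YY i = some YY') :
    ∃ r j, YY' = Function.update YY r ((YY r).addBox j) ∧
      (j = 0 ∨ (YY r).y (j - 1) < (YY r).y j) ∧ ((j : ℤ) + (YY r).y j) % 2 = i := by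
  unfold ftilde at h
  rcases hp : ftildePos k YY i with _ | ⟨r, j, b⟩ <;> rw [hp] at h
  · simp at h
  · simp only [Option.some.injEq] at h
    refine ⟨r, j, h.symm, ?_⟩
    have hmem : (r, j, b) ∈
        ((signature k YY i).foldl stackStep []).filter (fun e => !e.2.2) := by
      obtain ⟨hne, he⟩ := List.mem_getLast?_eq_getLast (Option.mem_def.mpr hp)
      rw [he]; exact List.getLast_mem hne
    rw [List.mem_filter] at hmem
    obtain ⟨hmem, hb⟩ := hmem
    have hb' : b = false := by simpa using hb
    subst hb'
    rcases mem_foldl_stackStep _ _ _ hmem with h' | h'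
    · simp at h'
    · exact mem_signature_prop h'


/-- The key invariant: each width grows by at most one, and once a diagram's width
has grown, the diagonal color of its new rightmost column differs from `i`, so `f̃_i`
can never grow that width again. -/
def WInv (k : ℕ) (i : ℤ) (W : Fin k → ℕ) (ZZ : Fin k → EYD) : Prop :=
  ∀ r, (ZZ r).width ≤ W r + 1 ∧
    ((ZZ r).width = W r + 1 → (((ZZ r).width : ℤ) + (ZZ r).charge) % 2 ≠ i)

lemma wInv_step {k : ℕ} {i : ℤ} {W : Fin k → ℕ} {ZZ ZZ' : Fin k → EYD}
    (h : ftilde k ZZ i = some ZZ') (hI : WInv k i W ZZ) : WInv k i W ZZ' := by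
  obtain ⟨r, j, rfl, hcond, hpar⟩ := ftilde_eq_some h
  intro r'
  rcases eq_or_ne r' r with rfl | hne
  · rw [Function.update_self]
    obtain ⟨hW, hP⟩ := hI r'
    rcases lt_trichotomy j (ZZ r').width with hj | hj | hj
    · rw [EYD.width_addBox_lt _ hj, EYD.charge_addBox]
      exact ⟨hW, hP⟩
    · subst hj
      have hyw := (ZZ r').y_width
      have hw : (((ZZ r').width : ℤ) + (ZZ r').charge) % 2 = i := by
        rw [← hyw]; exact hpar
      have hne' : (ZZ r').width ≠ W r' + 1 := fun he => hP he hw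
      rw [EYD.width_addBox_eq _ hcond, EYD.charge_addBox]
      refine ⟨by omega, fun _ => ?_⟩
      push_cast
      omega
    · rw [EYD.addBox_gt _ hj]
      exact hI r'
  · rw [Function.update_of_ne hne]
    exact hI r'

lemma wInv_iter {k : ℕ} {i : ℤ} {W : Fin k → ℕ} (n : ℕ) :
    ∀ {ZZ YY' : Fin k → EYD}, ftildeIter k i n ZZ = some YY' →
      WInv k i W ZZ → WInv k i W YY' := by
  induction n with
  | zero =>
    intro ZZ YY' h hI
    simp only [ftildeIter, Option.some.injEq] at h
    exact h ▸ hI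
  | succ n ih =>
    intro ZZ YY' h hI
    simp only [ftildeIter] at h
    rcases Option.bind_eq_some_iff.mp h with ⟨ZZ', h1, h2⟩
    exact ih h2 (wInv_step h1 hI)

theorem width_le_of_ftilde_iter (s t k : ℕ) (hk : k = s + t) (i : ℤ)
    (hi : i = 0 ∨ i = 1) (YY YY' : Fin k → EYD)
    (hch : ∀ r : Fin k, (YY r).charge = if (r : ℕ) < s then 0 else 1)
    (n : ℕ) (hn : 0 < n) (h : ftildeIter k i n YY = some YY') :
    ∀ r : Fin k, (YY' r).width ≤ (YY r).width + 1 := by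
  have hI : WInv k i (fun r => (YY r).width) YY := by
    intro r
    refine ⟨Nat.le_succ _, fun he => ?_⟩
    simp only at he
    omega
  intro r
  exact (wInv_iter n h hI r).1
end

section
/- For k = 1 (level one), the principal specialization identity reduces to: Σ_{x_0 + x_1 = L, x_0,x_1 ≥ 0} q^{(1/2)S(S+1)} [L choose x_0]_{q^2} = Σ_{0 ≤ i ≤ L} q^{i(i+1)/2} [L choose i]_q, where S = x_0 - x_1; i.e., Σ_{m=0}^{L} q^{(L-2m)(L-2m+1)/2} [L choose m]_{q^2} = Σ_{i=0}^{L} q^{i(i+1)/2} [L choose i]_q. -/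
/- STATEMENT 18: the `k = 1` case of the principal specialization identity:
`Σ_{m=0}^{L} q^{(L-2m)(L-2m+1)/2} [L choose m]_{q²} = Σ_{i=0}^{L} q^{i(i+1)/2} [L choose i]_q`.
In `RatFunc ℚ`, `q = RatFunc.X`; the exponent `(L-2m)(L-2m+1)/2` is an exact integer
division in `ℤ` (the product of consecutive integers is even). -/

open Finset

/-- `(q;q)_m`. -/
noncomputable def qFac (m : ℕ) : RatFunc ℚ :=
  ∏ j ∈ range m, (1 - RatFunc.X ^ (j + 1))

/-- `(q²;q²)_m`. -/
noncomputable def qFacSq (m : ℕ) : RatFunc ℚ :=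
  ∏ j ∈ range m, (1 - RatFunc.X ^ (2 * (j + 1)))

/-- generic `(t;t)_m`. -/
noncomputable def Pf (t : RatFunc ℚ) (m : ℕ) : RatFunc ℚ :=
  ∏ j ∈ range m, (1 - t ^ (j + 1))

/-- generic Gaussian binomial. -/
noncomputable def gb (t : RatFunc ℚ) (L m : ℕ) : RatFunc ℚ :=
  Pf t L / (Pf t m * Pf t (L - m))

lemma Xpow_ne_one (n : ℕ) : (RatFunc.X : RatFunc ℚ) ^ (n + 1) ≠ 1 := by
  intro h
  have h2 : (Polynomial.X : Polynomial ℚ) ^ (n + 1) = 1 := by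
    apply RatFunc.algebraMap_injective ℚ
    rw [map_pow, RatFunc.algebraMap_X, h, map_one]
  have := congrArg (fun p => Polynomial.coeff p 0) h2
  simp [Polynomial.coeff_X_pow] at this

lemma Pf_ne_zero (t : RatFunc ℚ) (ht : ∀ n : ℕ, t ^ (n + 1) ≠ 1) (m : ℕ) :
    Pf t m ≠ 0 := by
  rw [Pf]
  apply Finset.prod_ne_zero_iff.2
  intro j _
  exact sub_ne_zero.2 (fun h => ht j h.symm)

lemma Pf_succ (t : RatFunc ℚ) (m : ℕ) : Pf t (m + 1) = Pf t m * (1 - t ^ (m + 1)) :=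
  Finset.prod_range_succ _ _

lemma Pf_zero (t : RatFunc ℚ) : Pf t 0 = 1 := rfl

lemma gb_zero (t : RatFunc ℚ) (ht : ∀ n : ℕ, t ^ (n + 1) ≠ 1) (L : ℕ) : gb t L 0 = 1 := by
  rw [gb, Pf_zero, Nat.sub_zero, one_mul, div_self (Pf_ne_zero t ht L)]

lemma gb_self (t : RatFunc ℚ) (ht : ∀ n : ℕ, t ^ (n + 1) ≠ 1) (L : ℕ) : gb t L L = 1 := by
  rw [gb, Nat.sub_self, Pf_zero, mul_one, div_self (Pf_ne_zero t ht L)]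

lemma gb_symm (t : RatFunc ℚ) (L m : ℕ) (h : m ≤ L) : gb t L (L - m) = gb t L m := by
  rw [gb, gb, Nat.sub_sub_self h, mul_comm]

lemma gb_pascal1 (t : RatFunc ℚ) (ht : ∀ n : ℕ, t ^ (n + 1) ≠ 1) (L m : ℕ) (h : m < L) :
    gb t (L + 1) (m + 1) = t ^ (m + 1) * gb t L (m + 1) + gb t L m := by
  obtain ⟨d, rfl⟩ : ∃ d, L = m + d + 1 := ⟨L - m - 1, by omega⟩
  have e1 : m + d + 1 + 1 - (m + 1) = d + 1 := by omega
  have e2 : m + d + 1 - (m + 1) = d := by omega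
  have e3 : m + d + 1 - m = d + 1 := by omega
  rw [gb, gb, gb, e1, e2, e3]
  rw [show m + d + 1 + 1 = (m + d + 1) + 1 from rfl, Pf_succ t (m + d + 1),
    Pf_succ t m, Pf_succ t d]
  have h1 := Pf_ne_zero t ht m
  have h2 := Pf_ne_zero t ht d
  have h3 := Pf_ne_zero t ht (m + d + 1)
  have h4 : (1 : RatFunc ℚ) - t ^ (m + 1) ≠ 0 := sub_ne_zero.2 (fun h => ht m h.symm)
  have h5 : (1 : RatFunc ℚ) - t ^ (d + 1) ≠ 0 := sub_ne_zero.2 (fun h => ht d h.symm)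
  field_simp
  ring

lemma gb_pascal2 (t : RatFunc ℚ) (ht : ∀ n : ℕ, t ^ (n + 1) ≠ 1) (L m : ℕ) (h : m < L) :
    gb t (L + 1) (m + 1) = gb t L (m + 1) + t ^ (L - m) * gb t L m := by
  obtain ⟨d, rfl⟩ : ∃ d, L = m + d + 1 := ⟨L - m - 1, by omega⟩
  have e1 : m + d + 1 + 1 - (m + 1) = d + 1 := by omega
  have e2 : m + d + 1 - (m + 1) = d := by omega
  have e3 : m + d + 1 - m = d + 1 := by omega
  rw [gb, gb, gb, e1, e2, e3]
  rw [show m + d + 1 + 1 = (m + d + 1) + 1 from rfl, Pf_succ t (m + d + 1),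
    Pf_succ t m, Pf_succ t d]
  have h1 := Pf_ne_zero t ht m
  have h2 := Pf_ne_zero t ht d
  have h3 := Pf_ne_zero t ht (m + d + 1)
  have h4 : (1 : RatFunc ℚ) - t ^ (m + 1) ≠ 0 := sub_ne_zero.2 (fun h => ht m h.symm)
  have h5 : (1 : RatFunc ℚ) - t ^ (d + 1) ≠ 0 := sub_ne_zero.2 (fun h => ht d h.symm)
  field_simp
  ring

theorem sumA (L : ℕ) :
    ∑ i ∈ range (L + 1), (RatFunc.X : RatFunc ℚ) ^ (i * (i + 1) / 2) * gb RatFunc.X L i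
      = ∏ j ∈ range L, (1 + (RatFunc.X : RatFunc ℚ) ^ (j + 1)) := by
  have hX := Xpow_ne_one
  induction L with
  | zero => simp [gb_zero _ hX]
  | succ L ih =>
    set q : RatFunc ℚ := RatFunc.X with hq
    set S : RatFunc ℚ := ∑ i ∈ range (L + 1), q ^ (i * (i + 1) / 2) * gb q L i with hSdef
    have hsplit : ∑ i ∈ range (L + 1 + 1), q ^ (i * (i + 1) / 2) * gb q (L + 1) i
        = ((∑ i ∈ range L, q ^ ((i + 1) * (i + 1 + 1) / 2) * gb q (L + 1) (i + 1))
            + q ^ ((L + 1) * (L + 1 + 1) / 2) * gb q (L + 1) (L + 1))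
          + q ^ (0 * (0 + 1) / 2) * gb q (L + 1) 0 := by
      rw [Finset.sum_range_succ' (fun i => q ^ (i * (i + 1) / 2) * gb q (L + 1) i) (L + 1),
        Finset.sum_range_succ]
    have hmid : ∑ i ∈ range L, q ^ ((i + 1) * (i + 1 + 1) / 2) * gb q (L + 1) (i + 1)
        = (∑ i ∈ range L, q ^ ((i + 1) * (i + 1 + 1) / 2) * gb q L (i + 1))
          + q ^ (L + 1) * ∑ i ∈ range L, q ^ (i * (i + 1) / 2) * gb q L i := by
      rw [Finset.mul_sum, ← Finset.sum_add_distrib]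
      refine Finset.sum_congr rfl fun i hi => ?_
      rw [gb_pascal2 q hX L i (mem_range.mp hi), mul_add]
      congr 1
      have he : (i + 1) * (i + 1 + 1) / 2 + (L - i) = (L + 1) + i * (i + 1) / 2 := by
        obtain ⟨k, hk⟩ := Nat.even_mul_succ_self i
        have h1 : (i + 1) * (i + 1 + 1) = i * (i + 1) + 2 * (i + 1) := by ring
        have hi' : i < L := mem_range.mp hi
        rw [hk] at h1
        rw [h1, hk]
        omega
      rw [← mul_assoc, ← pow_add, he, pow_add, mul_assoc]
    have hSum1 : ∑ i ∈ range L, q ^ ((i + 1) * (i + 1 + 1) / 2) * gb q L (i + 1) = S - 1 := by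
      have h := Finset.sum_range_succ' (fun i => q ^ (i * (i + 1) / 2) * gb q L i) L
      rw [← hSdef] at h
      simp only [gb_zero q hX, mul_one, Nat.zero_mul, Nat.zero_div, pow_zero] at h
      exact eq_sub_of_add_eq h.symm
    have hSum2 : ∑ i ∈ range L, q ^ (i * (i + 1) / 2) * gb q L i
        = S - q ^ (L * (L + 1) / 2) := by
      have h := Finset.sum_range_succ (fun i => q ^ (i * (i + 1) / 2) * gb q L i) L
      rw [← hSdef, gb_self q hX, mul_one] at h
      exact eq_sub_of_add_eq h.symm
    have hE : (L + 1) * (L + 1 + 1) / 2 = (L + 1) + L * (L + 1) / 2 := by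
      obtain ⟨k, hk⟩ := Nat.even_mul_succ_self L
      have h1 : (L + 1) * (L + 1 + 1) = L * (L + 1) + 2 * (L + 1) := by ring
      rw [hk] at h1
      rw [h1, hk]
      omega
    rw [hsplit, hmid, hSum1, hSum2, gb_self q hX, gb_zero q hX, hE,
      Finset.prod_range_succ, ← ih, pow_add]
    ring

/-- the exponent on the `q²` side. -/
def E (L m : ℕ) : ℤ := ((L : ℤ) - 2 * m) * ((L : ℤ) - 2 * m + 1) / 2

lemma E_sub (L m L' m' : ℕ) (c : ℤ)
    (h : ((L' : ℤ) - 2 * m') * ((L' : ℤ) - 2 * m' + 1)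
        = ((L : ℤ) - 2 * m) * ((L : ℤ) - 2 * m + 1) + 2 * c) :
    E L' m' = E L m + c := by
  unfold E
  obtain ⟨k, hk⟩ := Int.even_mul_succ_self ((L : ℤ) - 2 * (m : ℤ))
  rw [h, hk]
  omega

theorem sumB (L : ℕ) :
    ∑ m ∈ range (L + 1), (RatFunc.X : RatFunc ℚ) ^ (E L m) * gb (RatFunc.X ^ 2) L m
      = ∏ j ∈ range L, (1 + (RatFunc.X : RatFunc ℚ) ^ (j + 1)) := by
  have hX2 : ∀ n : ℕ, ((RatFunc.X : RatFunc ℚ) ^ 2) ^ (n + 1) ≠ 1 := by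
    intro n h
    rw [← pow_mul] at h
    have h2 : (RatFunc.X : RatFunc ℚ) ^ (2 * n + 1 + 1) = 1 := by
      rw [show 2 * n + 1 + 1 = 2 * (n + 1) by ring]; exact h
    exact Xpow_ne_one (2 * n + 1) h2
  have hq0 : (RatFunc.X : RatFunc ℚ) ≠ 0 := RatFunc.X_ne_zero
  set q : RatFunc ℚ := RatFunc.X with hq
  induction L with
  | zero => simp [E, gb_zero _ hX2]
  | succ L ih =>
    set S : RatFunc ℚ := ∑ m ∈ range (L + 1), q ^ (E L m) * gb (q ^ 2) L m with hSdef
    have hsplit : ∑ m ∈ range (L + 1 + 1), q ^ (E (L + 1) m) * gb (q ^ 2) (L + 1) m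
        = ((∑ m ∈ range L, q ^ (E (L + 1) (m + 1)) * gb (q ^ 2) (L + 1) (m + 1))
            + q ^ (E (L + 1) (L + 1)) * gb (q ^ 2) (L + 1) (L + 1))
          + q ^ (E (L + 1) 0) * gb (q ^ 2) (L + 1) 0 := by
      rw [Finset.sum_range_succ' (fun m => q ^ (E (L + 1) m) * gb (q ^ 2) (L + 1) m) (L + 1),
        Finset.sum_range_succ]
    have hmid : ∑ m ∈ range L, q ^ (E (L + 1) (m + 1)) * gb (q ^ 2) (L + 1) (m + 1)
        = q ^ ((L : ℤ) + 1) * (∑ m ∈ range L, q ^ (E L (m + 1)) * gb (q ^ 2) L (m + 1))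
          + ∑ m ∈ range L, q ^ (E L m + (2 * (m : ℤ) - L)) * gb (q ^ 2) L m := by
      rw [Finset.mul_sum, ← Finset.sum_add_distrib]
      refine Finset.sum_congr rfl fun m hm => ?_
      rw [gb_pascal1 (q ^ 2) hX2 L m (mem_range.mp hm), mul_add]
      have h1 : E (L + 1) (m + 1) = E L (m + 1) + ((L : ℤ) - 2 * m - 1) :=
        E_sub L (m + 1) (L + 1) (m + 1) _ (by push_cast; ring)
      have h2 : E (L + 1) (m + 1) = E L m + (2 * (m : ℤ) - L) :=
        E_sub L m (L + 1) (m + 1) _ (by push_cast; ring)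
      congr 1
      · rw [← pow_mul, ← zpow_natCast q (2 * (m + 1)), ← mul_assoc, ← zpow_add₀ hq0]
        have he : E (L + 1) (m + 1) + ((2 * (m + 1) : ℕ) : ℤ) = ((L : ℤ) + 1) + E L (m + 1) := by
          push_cast
          linarith [h1]
        rw [he, zpow_add₀ hq0, mul_assoc]
      · rw [h2]
    have hfend : q ^ (E (L + 1) (L + 1)) * gb (q ^ 2) (L + 1) (L + 1)
        = q ^ (E L L + (2 * (L : ℤ) - L)) * gb (q ^ 2) L L := by
      rw [gb_self _ hX2, gb_self _ hX2, mul_one, mul_one]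
      congr 1
      exact E_sub L L (L + 1) (L + 1) (2 * (L : ℤ) - L) (by push_cast; ring)
    have hrefl : ∑ m ∈ range (L + 1), q ^ (E L m + (2 * (m : ℤ) - L)) * gb (q ^ 2) L m = S := by
      have hr := Finset.sum_range_reflect
        (fun m => q ^ (E L m + (2 * (m : ℤ) - L)) * gb (q ^ 2) L m) (L + 1)
      rw [← hr, hSdef]
      refine Finset.sum_congr rfl fun j hj => ?_
      have hjL : j ≤ L := by have := mem_range.mp hj; omega
      have hidx : L + 1 - 1 - j = L - j := by omega
      rw [hidx, gb_symm (q ^ 2) L j hjL]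
      congr 1
      have h4 : E L (L - j) = E L j + (2 * (j : ℤ) - L) :=
        E_sub L j L (L - j) _ (by rw [Nat.cast_sub hjL]; ring)
      have hc : ((L - j : ℕ) : ℤ) = (L : ℤ) - j := Nat.cast_sub hjL
      rw [h4, hc]
      ring
    have hS2 : (∑ m ∈ range L, q ^ (E L m + (2 * (m : ℤ) - L)) * gb (q ^ 2) L m)
        + q ^ (E (L + 1) (L + 1)) * gb (q ^ 2) (L + 1) (L + 1) = S := by
      rw [hfend,
        ← Finset.sum_range_succ (fun m => q ^ (E L m + (2 * (m : ℤ) - L)) * gb (q ^ 2) L m) L]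
      exact hrefl
    have hS1 : ∑ m ∈ range L, q ^ (E L (m + 1)) * gb (q ^ 2) L (m + 1) = S - q ^ (E L 0) := by
      have h := Finset.sum_range_succ' (fun m => q ^ (E L m) * gb (q ^ 2) L m) L
      rw [← hSdef, gb_zero _ hX2, mul_one] at h
      exact eq_sub_of_add_eq h.symm
    have hlast : q ^ (E (L + 1) 0) * gb (q ^ 2) (L + 1) 0 = q ^ ((L : ℤ) + 1) * q ^ (E L 0) := by
      rw [gb_zero _ hX2, mul_one, ← zpow_add₀ hq0]
      congr 1
      have h5 : E (L + 1) 0 = E L 0 + ((L : ℤ) + 1) :=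
        E_sub L 0 (L + 1) 0 _ (by push_cast; ring)
      linarith [h5]
    have hz : q ^ ((L : ℤ) + 1) = q ^ (L + 1) := by
      rw [← zpow_natCast q (L + 1)]
      congr 1
    rw [hsplit]
    rw [hmid, hS1, hlast, Finset.prod_range_succ, ← ih, hz]
    linear_combination hS2

lemma qFac_eq (m : ℕ) : qFac m = Pf RatFunc.X m := rfl

lemma qFacSq_eq (m : ℕ) : qFacSq m = Pf (RatFunc.X ^ 2) m := by
  unfold qFacSq Pf
  refine Finset.prod_congr rfl fun j _ => ?_
  rw [← pow_mul]

theorem principal_specialization_level_one (L : ℕ) :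
    ∑ m ∈ range (L + 1),
      (RatFunc.X : RatFunc ℚ) ^ ((((L : ℤ) - 2 * m) * ((L : ℤ) - 2 * m + 1)) / 2)
        * (qFacSq L / (qFacSq m * qFacSq (L - m)))
    = ∑ i ∈ range (L + 1),
        (RatFunc.X : RatFunc ℚ) ^ (i * (i + 1) / 2)
          * (qFac L / (qFac i * qFac (L - i))) := by
  have hl : ∑ m ∈ range (L + 1),
      (RatFunc.X : RatFunc ℚ) ^ ((((L : ℤ) - 2 * m) * ((L : ℤ) - 2 * m + 1)) / 2)
        * (qFacSq L / (qFacSq m * qFacSq (L - m)))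
      = ∑ m ∈ range (L + 1), (RatFunc.X : RatFunc ℚ) ^ (E L m) * gb (RatFunc.X ^ 2) L m := by
    refine Finset.sum_congr rfl fun m _ => ?_
    rw [qFacSq_eq, qFacSq_eq, qFacSq_eq]
    rfl
  have hr : ∑ i ∈ range (L + 1),
      (RatFunc.X : RatFunc ℚ) ^ (i * (i + 1) / 2) * (qFac L / (qFac i * qFac (L - i)))
      = ∑ i ∈ range (L + 1), (RatFunc.X : RatFunc ℚ) ^ (i * (i + 1) / 2) * gb RatFunc.X L i := by
    refine Finset.sum_congr rfl fun i _ => ?_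
    rfl
  rw [hl, hr, sumA, sumB]
end
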